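/- Let k be a field, G a group, and V a k-linear representation of G. Suppose V is the internal direct sum of a family of k-subspaces (V_i)_{i∈I} indexed by a finite nonempty set I, and that there is a normal subgroup N of G such that: each V_i is stable under the action of N and is a simple (irreducible) representation of N; the V_i are pairwise non-isomorphic as N-representations; and G permutes the family of subspaces transitively, i.e., for every g ∈ G and every i ∈ I there exists j ∈ I with g · V_i = V_j, and for all i, j ∈ I there exists g ∈ G with g · V_i = V_j. Then V is a simple (irreducible) representation of G. -/
import Mathlib

open DirectSum

section Aux

variable {k V : Type*} [Field k] [AddCommGroup V] [Module k V]
variable {I : Type*} [Fintype I] [DecidableEq I] (Vfam : I → Submodule k V)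
variable [Decomposition Vfam]

/-- The sum of the components of `v` is `v`. -/
theorem stmt2_sum_decompose (v : V) :
    ∑ i, ((decompose Vfam v i : V)) = v := by
  have h := congrArg (decomposeAddEquiv Vfam).symm (DirectSum.sum_univ_of (decompose Vfam v))
  rw [map_sum] at h
  simpa [decompose_symm_of] using h

theorem stmt2_exists_ne_zero {v : V} (hv : v ≠ 0) :
    ∃ i, ((decompose Vfam v i : V)) ≠ 0 := by
  by_contra h
  push_neg at h
  apply hv
  rw [← stmt2_sum_decompose Vfam v]
  exact Finset.sum_eq_zero fun i _ => h i

end Aux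

/-- Representation-theoretic step from the proof of Lemma 3.2: if `V` is an internal
direct sum of subspaces `V_i` which are stable and simple, pairwise non-isomorphic
representations of a normal subgroup `N`, and `G` permutes the `V_i` transitively,
then `V` is a simple representation of `G`. -/
theorem stmt_2 {k V G : Type*} [Field k] [AddCommGroup V] [Module k V] [Group G]
    (ρ : Representation k G V)
    {I : Type*} [Fintype I] [Nonempty I] [DecidableEq I]
    (Vfam : I → Submodule k V)
    (hdirect : DirectSum.IsInternal Vfam)
    (N : Subgroup G) (hNnormal : N.Normal)
    (hstab : ∀ i, ∀ n ∈ N, ∀ v ∈ Vfam i, ρ n v ∈ Vfam i)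
    (hsimple : ∀ i, Vfam i ≠ ⊥ ∧
      ∀ W : Submodule k V, W ≤ Vfam i → (∀ n ∈ N, ∀ v ∈ W, ρ n v ∈ W) →
        W = ⊥ ∨ W = Vfam i)
    (hnoniso : ∀ i j, i ≠ j →
      ¬ ∃ e : (Vfam i) ≃ₗ[k] (Vfam j),
        ∀ (n : G) (hn : n ∈ N) (v : V) (hv : v ∈ Vfam i),
          ((e ⟨ρ n v, hstab i n hn v hv⟩ : Vfam j) : V) = ρ n ((e ⟨v, hv⟩ : Vfam j) : V))
    (hperm : ∀ (g : G) (i : I), ∃ j, (Vfam i).map (ρ g) = Vfam j)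
    (htrans : ∀ i j : I, ∃ g : G, (Vfam i).map (ρ g) = Vfam j) :
    ((⊤ : Submodule k V) ≠ ⊥) ∧
    (∀ W : Submodule k V, (∀ (g : G), ∀ v ∈ W, ρ g v ∈ W) → W = ⊥ ∨ W = ⊤) := by
  classical
  haveI : DirectSum.Decomposition Vfam := hdirect.chooseDecomposition
  constructor
  · -- ⊤ ≠ ⊥
    obtain ⟨i⟩ := ‹Nonempty I›
    intro h
    exact (hsimple i).1 (le_bot_iff.mp (h ▸ (le_top : Vfam i ≤ ⊤)))
  intro W hW
  by_cases hW0 : W = ⊥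
  · exact Or.inl hW0
  right
  -- projections
  set π : (i : I) → (V →ₗ[k] ↥(Vfam i)) := fun i =>
    (DirectSum.component k I (fun i => ↥(Vfam i)) i) ∘ₗ
      (decomposeLinearEquiv Vfam).toLinearMap with hπ
  have hπ_apply : ∀ (i : I) (v : V), (π i v : V) = (decompose Vfam v i : V) := fun i v => rfl
  -- commutation of projections with the N-action
  have hcomm : ∀ n ∈ N, ∀ (v : V) (i : I),
      ((decompose Vfam (ρ n v) i : V)) = ρ n ((decompose Vfam v i : V)) := by
    intro n hn v i
    conv_lhs => rw [← stmt2_sum_decompose Vfam v]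
    rw [map_sum, decompose_sum]
    rw [DFinsupp.finset_sum_apply]
    rw [AddSubmonoidClass.coe_finset_sum]
    rw [Finset.sum_eq_single i]
    · exact decompose_of_mem_same Vfam (hstab i n hn _ (decompose Vfam v i).2)
    · intro j _ hj
      exact decompose_of_mem_ne Vfam (hstab j n hn _ (decompose Vfam v j).2) hj
    · intro h; exact absurd (Finset.mem_univ i) h
  -- supports
  set supp : V → Finset I := fun v =>
    Finset.univ.filter (fun i => ((decompose Vfam v i : V)) ≠ 0) with hsupp
  have hsupp_nonempty : ∀ v : V, v ≠ 0 → (supp v).Nonempty := by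
    intro v hv
    obtain ⟨i, hi⟩ := stmt2_exists_ne_zero Vfam hv
    exact ⟨i, Finset.mem_filter.mpr ⟨Finset.mem_univ i, hi⟩⟩
  -- choose a nonzero element of W with minimal support
  have hex : ∃ n : ℕ, ∃ w, w ∈ W ∧ w ≠ 0 ∧ (supp w).card = n := by
    obtain ⟨w, hwW, hw0⟩ := Submodule.exists_mem_ne_zero_of_ne_bot hW0
    exact ⟨(supp w).card, w, hwW, hw0, rfl⟩
  obtain ⟨w, hwW, hw0, hwcard⟩ := Nat.find_spec hex
  set n₀ : ℕ := Nat.find hex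
  have hmin : ∀ v, v ∈ W → v ≠ 0 → n₀ ≤ (supp v).card := by
    intro v hvW hv0
    exact Nat.find_le ⟨v, hvW, hv0, rfl⟩
  set S : Finset I := supp w with hS
  -- the submodule of elements of W supported in S
  set q : I → (V →ₗ[k] V) := fun i => (Vfam i).subtype ∘ₗ π i with hq
  have hq_apply : ∀ (i : I) (v : V), q i v = (decompose Vfam v i : V) := fun i v => rfl
  set WS : Submodule k V := W ⊓ (⨅ j ∈ (Sᶜ : Finset I), LinearMap.ker (q j)) with hWS
  have hWS_mem : ∀ v : V, v ∈ WS ↔ v ∈ W ∧ ∀ j ∉ S, ((decompose Vfam v j : V)) = 0 := by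
    intro v
    simp only [hWS, Submodule.mem_inf, Submodule.mem_iInf, LinearMap.mem_ker,
      Finset.mem_compl, hq_apply]
  have hwWS : w ∈ WS := by
    rw [hWS_mem]
    refine ⟨hwW, fun j hj => ?_⟩
    by_contra h
    exact hj (Finset.mem_filter.mpr ⟨Finset.mem_univ j, h⟩)
  -- support of nonzero elements of WS is exactly S
  have hsuppWS : ∀ v ∈ WS, v ≠ 0 → supp v = S := by
    intro v hv hv0
    rw [hWS_mem] at hv
    have hsub : supp v ⊆ S := by
      intro i hi
      by_contra h
      exact (Finset.mem_filter.mp hi).2 (hv.2 i h)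
    have hcard : S.card ≤ (supp v).card := hwcard ▸ hmin v hv.1 hv0
    exact Finset.eq_of_subset_of_card_le hsub hcard
  -- WS is N-stable
  have hWSstab : ∀ m ∈ N, ∀ v ∈ WS, ρ m v ∈ WS := by
    intro m hm v hv
    rw [hWS_mem] at hv ⊢
    refine ⟨hW m v hv.1, fun j hj => ?_⟩
    rw [hcomm m hm v j, hv.2 j hj, map_zero]
  -- for i ∈ S, projection from WS to Vfam i is bijective
  set f : (i : I) → (↥WS →ₗ[k] ↥(Vfam i)) := fun i => (π i) ∘ₗ WS.subtype with hf
  have hf_apply : ∀ (i : I) (v : ↥WS), ((f i v : V)) = (decompose Vfam (v : V) i : V) :=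
    fun i v => rfl
  have hinj : ∀ i ∈ S, Function.Injective (f i) := by
    intro i hi u u' h
    rw [← sub_eq_zero] at h ⊢
    have h2 : f i (u - u') = 0 := by rw [map_sub, h]
    by_contra hne
    have hne' : ((u - u' : ↥WS) : V) ≠ 0 := by
      simpa using fun hc => hne (Subtype.ext hc)
    have : i ∈ supp ((u - u' : ↥WS) : V) := by
      rw [hsuppWS _ (u - u').2 hne']
      exact hi
    have h3 : ((decompose Vfam ((u - u' : ↥WS) : V) i : V)) ≠ 0 := (Finset.mem_filter.mp this).2
    apply h3
    rw [← hf_apply, h2]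
    rfl
  have hsurj : ∀ i ∈ S, Function.Surjective (f i) := by
    intro i hi
    -- the image of WS under q i is a nonzero N-stable submodule of Vfam i
    have hQle : WS.map (q i) ≤ Vfam i := by
      rintro x ⟨v, hv, rfl⟩
      exact (π i v).2
    have hQstab : ∀ m ∈ N, ∀ x ∈ WS.map (q i), ρ m x ∈ WS.map (q i) := by
      rintro m hm x ⟨v, hv, rfl⟩
      refine ⟨ρ m v, hWSstab m hm v hv, ?_⟩
      rw [hq_apply, hq_apply, hcomm m hm v i]
    have hQne : WS.map (q i) ≠ ⊥ := by
      intro h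
      have : q i w = 0 := by
        have : q i w ∈ (⊥ : Submodule k V) := h ▸ Submodule.mem_map_of_mem hwWS
        simpa using this
      rw [hq_apply] at this
      exact (Finset.mem_filter.mp (hS ▸ hi : i ∈ supp w)).2 this
    have hQ : WS.map (q i) = Vfam i := ((hsimple i).2 _ hQle hQstab).resolve_left hQne
    intro y
    have : ((y : V)) ∈ WS.map (q i) := by rw [hQ]; exact y.2
    obtain ⟨v, hv, hvy⟩ := this
    exact ⟨⟨v, hv⟩, Subtype.ext (by rw [← hvy]; rfl)⟩
  -- S must be a singleton, otherwise two of the V_i would be isomorphic N-reps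
  have hScard : S.card = 1 := by
    have h1 : 1 ≤ S.card := Finset.card_pos.mpr (hsupp_nonempty w hw0)
    by_contra h
    have h2 : 1 < S.card := lt_of_le_of_ne h1 (Ne.symm h)
    obtain ⟨i, hi, j, hj, hij⟩ := Finset.one_lt_card.mp h2
    apply hnoniso i j hij
    set ei : ↥WS ≃ₗ[k] ↥(Vfam i) :=
      LinearEquiv.ofBijective (f i) ⟨hinj i hi, hsurj i hi⟩ with hei
    set ej : ↥WS ≃ₗ[k] ↥(Vfam j) :=
      LinearEquiv.ofBijective (f j) ⟨hinj j hj, hsurj j hj⟩ with hej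
    refine ⟨ei.symm.trans ej, ?_⟩
    intro m hm v hv
    set u : ↥WS := ei.symm ⟨v, hv⟩ with hu
    have hfu : ((decompose Vfam (u : V) i : V)) = v := by
      have : ei u = ⟨v, hv⟩ := ei.apply_symm_apply _
      have := congrArg (Subtype.val) this
      rwa [← hf_apply]
    set u' : ↥WS := ⟨ρ m (u : V), hWSstab m hm _ u.2⟩ with hu'
    have hfu' : ei u' = ⟨ρ m v, hstab i m hm v hv⟩ := by
      apply Subtype.ext
      show ((f i u' : V)) = ρ m v
      rw [hf_apply, hu']
      show ((decompose Vfam (ρ m (u : V)) i : V)) = ρ m v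
      rw [hcomm m hm, hfu]
    have hsymm : ei.symm ⟨ρ m v, hstab i m hm v hv⟩ = u' := by
      rw [← hfu', ei.symm_apply_apply]
    show ((ej (ei.symm ⟨ρ m v, hstab i m hm v hv⟩) : V)) = ρ m ((ej (ei.symm ⟨v, hv⟩) : V))
    rw [hsymm, ← hu]
    show ((f j u' : V)) = ρ m ((f j u : V))
    rw [hf_apply, hf_apply, hu']
    show ((decompose Vfam (ρ m (u : V)) j : V)) = ρ m ((decompose Vfam (u : V) j : V))
    exact hcomm m hm _ j
  -- so w lies in some Vfam i, and Vfam i ≤ W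
  obtain ⟨i, hSi⟩ := Finset.card_eq_one.mp hScard
  have hwVi : w ∈ Vfam i := by
    have : w = ∑ j, ((decompose Vfam w j : V)) := (stmt2_sum_decompose Vfam w).symm
    rw [Finset.sum_eq_single i] at this
    · rw [this]; exact (decompose Vfam w i).2
    · intro j _ hji
      by_contra h
      have : j ∈ S := Finset.mem_filter.mpr ⟨Finset.mem_univ j, h⟩
      rw [hSi, Finset.mem_singleton] at this
      exact hji this
    · intro h; exact absurd (Finset.mem_univ i) h
  have hViW : Vfam i ≤ W := by
    have hle : W ⊓ Vfam i ≤ Vfam i := inf_le_right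
    have hstab' : ∀ m ∈ N, ∀ v ∈ W ⊓ Vfam i, ρ m v ∈ W ⊓ Vfam i := by
      intro m hm v hv
      exact ⟨hW m v hv.1, hstab i m hm v hv.2⟩
    have hne : W ⊓ Vfam i ≠ ⊥ := by
      intro h
      have : w ∈ (⊥ : Submodule k V) := h ▸ ⟨hwW, hwVi⟩
      exact hw0 (by simpa using this)
    have := ((hsimple i).2 _ hle hstab').resolve_left hne
    rw [← this]
    exact inf_le_left
  -- transitivity: every Vfam j is contained in W
  have hall : ∀ j, Vfam j ≤ W := by
    intro j
    obtain ⟨g, hg⟩ := htrans i j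
    rw [← hg]
    rintro x ⟨v, hv, rfl⟩
    exact hW g v (hViW hv)
  rw [eq_top_iff, ← hdirect.submodule_iSup_eq_top]
  exact iSup_le hall
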